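/- arXiv:2106.07269 — 5 statements merged into one kernel-verified Lean document; each statement's English description precedes it below -/
import Mathlib

section
/- The identity 2/ζ(s) = 2 - 2P(s) + P(s)² - P(2s) is false, where P(s) = Σ_{p prime} p^{-s} is the prime zeta function; specifically, it fails at s = 2. -/
open scoped Nat

open Set Filter Topology Real

/-- The prime zeta function `P(s) = ∑_{p prime} p^{-s}`. -/
noncomputable def primeZeta (s : ℝ) : ℝ := ∑' p : Nat.Primes, (p : ℝ) ^ (-s)

noncomputable def invSq (n : ℕ) : ℝ := ((n : ℝ) ^ 2)⁻¹

noncomputable def invFour (n : ℕ) : ℝ := ((n : ℝ) ^ 4)⁻¹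

lemma summable_invSq : Summable invSq :=
  Real.summable_nat_pow_inv.mpr (show 1 < 2 by norm_num)

lemma summable_invFour : Summable invFour :=
  Real.summable_nat_pow_inv.mpr (show 1 < 4 by norm_num)

lemma tail_sq_le (k : ℕ) (hk : 2 ≤ k) :
    ∑' n : ℕ, invSq (n + k) ≤ ((k : ℝ) - 1)⁻¹ := by
  have hk1 : (1 : ℝ) ≤ (k : ℝ) - 1 := by
    have : (2 : ℝ) ≤ (k : ℝ) := by exact_mod_cast hk
    linarith
  have hg : ∀ n : ℕ, (0:ℝ) < (k : ℝ) - 1 + n := fun n => by positivity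
  have htel : HasSum (fun n : ℕ => ((k : ℝ) - 1 + n)⁻¹ - ((k : ℝ) - 1 + (n + 1))⁻¹)
      (((k : ℝ) - 1)⁻¹) := by
    have hnn : ∀ n : ℕ, 0 ≤ ((k : ℝ) - 1 + n)⁻¹ - ((k : ℝ) - 1 + (n + 1))⁻¹ := by
      intro n
      have h2 : ((k : ℝ) - 1 + n) ≤ ((k : ℝ) - 1 + (n + 1)) := by linarith
      have := inv_anti₀ (hg n) h2
      linarith
    rw [hasSum_iff_tendsto_nat_of_nonneg hnn]
    have hsum : ∀ n : ℕ, ∑ i ∈ Finset.range n,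
        (((k : ℝ) - 1 + i)⁻¹ - ((k : ℝ) - 1 + (i + 1))⁻¹)
        = ((k : ℝ) - 1 + (0:ℕ))⁻¹ - ((k : ℝ) - 1 + (n:ℕ))⁻¹ := by
      intro n
      have := Finset.sum_range_sub' (fun i : ℕ => ((k : ℝ) - 1 + i)⁻¹) n
      simpa [Nat.cast_add, Nat.cast_one] using this
    simp only [hsum]
    have h0 : Tendsto (fun n : ℕ => ((k : ℝ) - 1 + n)⁻¹) atTop (𝓝 0) :=
      tendsto_inv_atTop_zero.comp
        (tendsto_atTop_add_const_left _ _ tendsto_natCast_atTop_atTop)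
    simpa using (tendsto_const_nhds.sub h0)
  have hsummF : Summable (fun n : ℕ => invSq (n + k)) :=
    (summable_nat_add_iff k).mpr summable_invSq
  refine le_of_le_of_eq (Summable.tsum_le_tsum ?_ hsummF htel.summable) htel.tsum_eq
  intro n
  have h1 : (0:ℝ) < (k : ℝ) - 1 + n := hg n
  have key : ((k : ℝ) - 1 + n)⁻¹ - ((k : ℝ) - 1 + (n + 1))⁻¹
      = (((k : ℝ) - 1 + n) * ((k : ℝ) + n))⁻¹ := by
    rw [inv_sub_inv (by positivity) (by positivity)]
    have h : (k : ℝ) - 1 + (n + 1) = (k : ℝ) + n := by ring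
    rw [h]
    congr 1
    ring
  rw [key, invSq]
  have hle : ((k : ℝ) - 1 + n) * ((k : ℝ) + n) ≤ ((n + k : ℕ) : ℝ) ^ 2 := by
    push_cast
    nlinarith
  exact inv_anti₀ (by positivity) hle

lemma primeZeta_two_eq :
    primeZeta 2 = ∑' n : ℕ, Set.indicator {p : ℕ | Nat.Prime p} invSq n := by
  rw [primeZeta, ← tsum_subtype {p : ℕ | Nat.Prime p} invSq]
  apply tsum_congr
  intro p
  rw [invSq, ← Real.rpow_natCast ((p : ℕ) : ℝ) 2, ← Real.rpow_neg (by positivity)]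
  norm_num

lemma primeZeta_four_eq :
    primeZeta 4 = ∑' n : ℕ, Set.indicator {p : ℕ | Nat.Prime p} invFour n := by
  rw [primeZeta, ← tsum_subtype {p : ℕ | Nat.Prime p} invFour]
  apply tsum_congr
  intro p
  rw [invFour, ← Real.rpow_natCast ((p : ℕ) : ℝ) 4, ← Real.rpow_neg (by positivity)]
  norm_num

set_option maxRecDepth 40000 in
set_option maxHeartbeats 4000000 in
lemma primeZeta_two_le : primeZeta 2 ≤ 0.4551015 := by
  rw [primeZeta_two_eq]
  set G : ℕ → ℝ := Set.indicator {p : ℕ | Nat.Prime p} invSq with hGdef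
  have hG : Summable G := summable_invSq.indicator _
  rw [← Summable.sum_add_tsum_nat_add 300 hG]
  have hfin : ∑ i ∈ Finset.range 300, G i ≤ 0.451757 := by
    have : ∀ i, G i = if Nat.Prime i then invSq i else 0 := by
      intro i
      simp [hGdef, Set.indicator_apply, Set.mem_setOf_eq]
    simp only [this]
    simp only [Finset.sum_range_succ, invSq]
    norm_num
  have htail : ∑' n : ℕ, G (n + 300) ≤ ((300 : ℝ) - 1)⁻¹ := by
    refine le_trans (Summable.tsum_le_tsum ?_ ((summable_nat_add_iff 300).mpr hG)
      ((summable_nat_add_iff 300).mpr summable_invSq)) (tail_sq_le 300 (by norm_num))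
    intro n
    exact Set.indicator_le_self' (fun x _ => by rw [invSq]; positivity) (n + 300)
  have : ((300 : ℝ) - 1)⁻¹ ≤ 0.0033445 := by norm_num
  linarith

set_option maxRecDepth 4000 in
lemma primeZeta_four_le : primeZeta 4 ≤ 0.0772260 := by
  rw [primeZeta_four_eq]
  set G : ℕ → ℝ := Set.indicator {p : ℕ | Nat.Prime p} invFour with hGdef
  have hG : Summable G := summable_invFour.indicator _
  rw [← Summable.sum_add_tsum_nat_add 16 hG]
  have hfin : ∑ i ∈ Finset.range 16, G i ≤ 0.0769655 := by
    have : ∀ i, G i = if Nat.Prime i then invFour i else 0 := by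
      intro i
      simp [hGdef, Set.indicator_apply, Set.mem_setOf_eq]
    simp only [this]
    simp only [Finset.sum_range_succ, invFour]
    norm_num
  have htail : ∑' n : ℕ, G (n + 16) ≤ (256 : ℝ)⁻¹ * ((16 : ℝ) - 1)⁻¹ := by
    have hstep : ∀ n : ℕ, G (n + 16) ≤ (256 : ℝ)⁻¹ * invSq (n + 16) := by
      intro n
      have h1 : G (n + 16) ≤ invFour (n + 16) :=
        Set.indicator_le_self' (fun x _ => by rw [invFour]; positivity) (n + 16)
      refine h1.trans ?_
      rw [invFour, invSq]
      have h16 : (16:ℝ) ≤ ((n + 16 : ℕ) : ℝ) := by push_cast; linarith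
      rw [show ((n + 16 : ℕ) : ℝ) ^ 4
          = ((n + 16 : ℕ) : ℝ) ^ 2 * ((n + 16 : ℕ) : ℝ) ^ 2 by ring, mul_inv]
      have h256 : (256:ℝ) ≤ ((n + 16 : ℕ) : ℝ) ^ 2 := by nlinarith
      exact mul_le_mul_of_nonneg_right (inv_anti₀ (by norm_num) h256) (by positivity)
    have hs2 : Summable (fun n : ℕ => (256 : ℝ)⁻¹ * invSq (n + 16)) :=
      ((summable_nat_add_iff 16).mpr summable_invSq).mul_left _
    refine le_trans (Summable.tsum_le_tsum hstep ((summable_nat_add_iff 16).mpr hG) hs2) ?_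
    rw [tsum_mul_left]
    have := tail_sq_le 16 (by norm_num)
    have h256 : (0:ℝ) ≤ (256:ℝ)⁻¹ := by norm_num
    exact mul_le_mul_of_nonneg_left this h256
  have : (256 : ℝ)⁻¹ * ((16 : ℝ) - 1)⁻¹ ≤ 0.0002605 := by norm_num
  linarith

lemma primeZeta_nonneg (s : ℝ) : 0 ≤ primeZeta s :=
  tsum_nonneg fun p => Real.rpow_nonneg (by positivity) _

lemma key_real :
    (12 / π ^ 2 : ℝ) < 2 - 2 * primeZeta 2 + (primeZeta 2) ^ 2 - primeZeta 4 := by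
  have h2 := primeZeta_two_le
  have h4 := primeZeta_four_le
  have h2n := primeZeta_nonneg 2
  have hπ := Real.pi_gt_d6
  have hπpos : (0:ℝ) < π := Real.pi_pos
  have hstep : (12 / π ^ 2 : ℝ) < 12 / (3.141592 : ℝ) ^ 2 := by
    apply div_lt_div_of_pos_left (by norm_num) (by norm_num)
    nlinarith
  have hmain : (12 / (3.141592 : ℝ) ^ 2 : ℝ) <
      2 - 2 * primeZeta 2 + (primeZeta 2) ^ 2 - primeZeta 4 := by
    nlinarith [mul_nonneg (sub_nonneg.mpr h2) (sub_nonneg.mpr h2)]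
  linarith

/-- The claimed identity `2/ζ(s) = 2 - 2 P(s) + P(s)² - P(2s)` fails at `s = 2`. -/
theorem identity_fails_at_two :
    (2 : ℂ) / riemannZeta 2 ≠
      2 - 2 * (primeZeta 2 : ℂ) + (primeZeta 2 : ℂ) ^ 2 - (primeZeta 4 : ℂ) := by
  intro h
  rw [riemannZeta_two] at h
  have hπ : ((π : ℂ)) ≠ 0 := by
    exact_mod_cast Complex.ofReal_ne_zero.mpr Real.pi_ne_zero
  have h2 : (2 : ℂ) / ((π : ℂ) ^ 2 / 6) = ((12 / π ^ 2 : ℝ) : ℂ) := by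
    push_cast
    field_simp
    ring
  rw [h2] at h
  have h3 : ((12 / π ^ 2 : ℝ) : ℂ) =
      ((2 - 2 * primeZeta 2 + (primeZeta 2) ^ 2 - primeZeta 4 : ℝ) : ℂ) := by
    rw [h]; push_cast; ring
  exact absurd (Complex.ofReal_inj.mp h3) (ne_of_lt key_real)
end

section
/- For real s > 1, the prime zeta function satisfies P(s) = Σ_{k=1}^∞ (μ(k)/k) · log ζ(ks), where μ is the Möbius function. -/
open ArithmeticFunction
open scoped ArithmeticFunction.Moebius ArithmeticFunction.zeta

lemma divisor_moebius_sum (n : ℕ) :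
    ∑ d ∈ n.divisorsAntidiagonal, ((μ d.1 : ℤ) : ℝ) = if n = 1 then 1 else 0 := by
  have h := congrArg (fun f : ArithmeticFunction ℤ => f n) moebius_mul_coe_zeta
  simp only [mul_apply, one_apply] at h
  have h2 : ∀ d ∈ n.divisorsAntidiagonal, (μ d.1 : ℤ) * ((ζ : ArithmeticFunction ℤ) d.2) = (μ d.1 : ℤ) := by
    intro d hd
    have hd2 : d.2 ≠ 0 := Nat.right_ne_zero_of_mem_divisorsAntidiagonal hd
    simp [natCoe_apply, zeta_apply_ne hd2]
  rw [Finset.sum_congr rfl h2] at h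
  have := congrArg (fun z : ℤ => (z : ℝ)) h
  push_cast at this
  simpa using this

lemma prime_rpow_facts (t : ℝ) (ht : 1 < t) (p : Nat.Primes) :
    0 < (p : ℝ) ^ (-t) ∧ (p : ℝ) ^ (-t) ≤ 1/2 := by
  have hp2 : (2 : ℝ) ≤ (p : ℕ) := by exact_mod_cast p.prop.two_le
  have hp0 : (0 : ℝ) < (p : ℕ) := by linarith
  constructor
  · exact Real.rpow_pos_of_pos hp0 _
  · have hpt : (2 : ℝ) ≤ (p : ℝ) ^ t := by
      calc (2 : ℝ) = 2 ^ (1 : ℝ) := (Real.rpow_one 2).symm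
        _ ≤ 2 ^ t := Real.rpow_le_rpow_of_exponent_le (by norm_num) ht.le
        _ ≤ (p : ℝ) ^ t := Real.rpow_le_rpow (by norm_num) hp2 (by linarith)
    rw [Real.rpow_neg hp0.le, show (1/2 : ℝ) = 2⁻¹ by norm_num]
    exact inv_anti₀ two_pos hpt

lemma summable_neg_log_one_sub (t : ℝ) (ht : 1 < t) :
    Summable (fun p : Nat.Primes => -Real.log (1 - (p : ℝ) ^ (-t))) := by
  have hsum : Summable (fun p : Nat.Primes => 2 * (p : ℝ) ^ (-t)) :=
    (Nat.Primes.summable_rpow.mpr (by linarith)).mul_left 2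
  refine hsum.of_nonneg_of_le (fun p => ?_) (fun p => ?_)
  · obtain ⟨h0, hh⟩ := prime_rpow_facts t ht p
    simp only [neg_nonneg]
    exact Real.log_nonpos (by linarith) (by linarith)
  · obtain ⟨h0, hh⟩ := prime_rpow_facts t ht p
    set y := (p : ℝ) ^ (-t)
    have h1y : (0:ℝ) < 1 - y := by linarith
    have : -Real.log (1 - y) = Real.log (1 - y)⁻¹ := by rw [Real.log_inv]
    rw [this]
    have hle : Real.log (1 - y)⁻¹ ≤ (1 - y)⁻¹ - 1 :=
      Real.log_le_sub_one_of_pos (by positivity)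
    have : (1 - y)⁻¹ - 1 ≤ 2 * y := by
      rw [inv_eq_one_div, div_sub' h1y.ne', div_le_iff₀ h1y]
      nlinarith
    linarith

lemma log_riemannZeta_eq' (t : ℝ) (ht : 1 < t) :
    Complex.log (riemannZeta t) =
      ((∑' p : Nat.Primes, -Real.log (1 - (p : ℝ) ^ (-t))) : ℝ) := by
  have htc : 1 < (t : ℂ).re := by simpa using ht
  have key := riemannZeta_eulerProduct_exp_log htc
  have hterm : ∀ p : Nat.Primes,
      -Complex.log (1 - (p : ℂ) ^ (-(t : ℂ))) = ((-Real.log (1 - (p : ℝ) ^ (-t))) : ℝ) := by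
    intro p
    obtain ⟨h0, hh⟩ := prime_rpow_facts t ht p
    have hp0 : (0 : ℝ) ≤ (p : ℕ) := by positivity
    have hc : ((p : ℕ) : ℂ) ^ (-(t : ℂ)) = (((p : ℝ) ^ (-t) : ℝ) : ℂ) := by
      rw [Complex.ofReal_cpow hp0]
      push_cast
      rfl
    rw [hc, ← Complex.ofReal_one, ← Complex.ofReal_sub, Complex.ofReal_neg,
      Complex.ofReal_log (by linarith)]
  rw [tsum_congr hterm, ← Complex.ofReal_tsum] at key
  rw [← key, Complex.log_exp] <;> simp [Real.pi_pos.le, Real.pi_pos]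

lemma hasSum_moebius_pow {y : ℝ} (h0 : 0 < y) (h1 : y < 1) :
    HasSum (fun km : ℕ × ℕ =>
      (μ (km.1 + 1) : ℝ) * y ^ ((km.1 + 1) * (km.2 + 1)) / (((km.1 + 1) * (km.2 + 1) : ℕ) : ℝ)) y := by
  set g : ℕ × ℕ → ℝ := fun ab => (μ ab.1 : ℝ) * y ^ (ab.1 * ab.2) / ((ab.1 * ab.2 : ℕ) : ℝ) with hg
  have hy0 : (0:ℝ) ≤ y := h0.le
  -- g vanishes when a coordinate is zero
  have hgz : ∀ ab : ℕ × ℕ, ab.1 = 0 ∨ ab.2 = 0 → g ab = 0 := by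
    rintro ⟨a, b⟩ (rfl | rfl) <;> simp [hg]
  -- summability of g
  have hgsum : Summable g := by
    have hb : Summable (fun ab : ℕ × ℕ => y⁻¹ * (y ^ ab.1 * y ^ ab.2)) := by
      refine Summable.mul_left _ ?_
      exact (summable_geometric_of_lt_one hy0 h1).mul_of_nonneg
        (summable_geometric_of_lt_one hy0 h1) (fun n => pow_nonneg hy0 n)
        (fun n => pow_nonneg hy0 n)
    refine Summable.of_abs (hb.of_nonneg_of_le (fun _ => abs_nonneg _) ?_)
    rintro ⟨a, b⟩
    rcases Nat.eq_zero_or_pos a with rfl | ha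
    · simp [hgz ⟨0, b⟩ (Or.inl rfl)]
      positivity
    rcases Nat.eq_zero_or_pos b with rfl | hb'
    · simp [hgz ⟨a, 0⟩ (Or.inr rfl)]
      positivity
    have hab : a + b ≤ a * b + 1 := by nlinarith
    have h3 : |g (a, b)| ≤ y ^ (a * b) := by
      rw [hg, abs_div, abs_mul, abs_pow, abs_of_nonneg hy0]
      have hn : (1:ℝ) ≤ |(((a * b : ℕ)) : ℝ)| := by
        rw [abs_of_nonneg (by positivity)]
        exact_mod_cast Nat.one_le_iff_ne_zero.mpr (by positivity)
      calc |(μ a : ℝ)| * y ^ (a*b) / |(((a * b : ℕ)) : ℝ)|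
          ≤ |(μ a : ℝ)| * y ^ (a*b) / 1 :=
            div_le_div_of_nonneg_left (by positivity) one_pos hn
        _ = |(μ a : ℝ)| * y ^ (a*b) := by ring
        _ ≤ 1 * y ^ (a*b) := by
            apply mul_le_mul_of_nonneg_right ?_ (by positivity)
            exact_mod_cast abs_moebius_le_one
        _ = y ^ (a*b) := one_mul _
    refine h3.trans ?_
    have : y ^ (a * b) ≤ y ^ (a + b - 1) := by
      apply pow_le_pow_of_le_one hy0 h1.le
      omega
    refine this.trans_eq ?_
    rw [eq_comm, ← mul_assoc, inv_mul_eq_div, div_mul_eq_mul_div, ← pow_add,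
      div_eq_iff (ne_of_gt h0), ← pow_succ]
    congr 1
    omega
  -- regroup along fibers of multiplication
  obtain ⟨S, hS⟩ := hgsum
  have hfib : ∀ n : ℕ, HasSum (fun d : {ab : ℕ × ℕ | ab.1 * ab.2 = n} => g d)
      (if n = 1 then y else 0) := by
    intro n
    show HasSum (g ∘ (Subtype.val : {ab : ℕ × ℕ | ab.1 * ab.2 = n} → ℕ × ℕ)) _
    rw [hasSum_subtype_iff_indicator]
    rcases Nat.eq_zero_or_pos n with rfl | hn
    · have hz : ({ab : ℕ × ℕ | ab.1 * ab.2 = 0}).indicator g = 0 := by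
        funext ab
        by_cases h : ab ∈ {ab : ℕ × ℕ | ab.1 * ab.2 = 0}
        · rw [Set.indicator_of_mem h]
          exact (hgz ab (Nat.mul_eq_zero.mp h)).trans rfl
        · exact Set.indicator_of_notMem h g
      rw [hz, if_neg (by norm_num)]
      exact hasSum_zero
    · have hne : n ≠ 0 := hn.ne'
      have hsupp : ∀ ab : ℕ × ℕ, ab ∉ n.divisorsAntidiagonal →
          ({ab : ℕ × ℕ | ab.1 * ab.2 = n}).indicator g ab = 0 := by
        intro ab hab
        apply Set.indicator_of_notMem
        intro hmem
        exact hab (Nat.mem_divisorsAntidiagonal.mpr ⟨hmem, hne⟩)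
      have := hasSum_sum_of_ne_finset_zero (L := SummationFilter.unconditional _) hsupp
      convert this using 1
      rw [eq_comm]
      calc ∑ ab ∈ n.divisorsAntidiagonal, ({ab : ℕ × ℕ | ab.1 * ab.2 = n}).indicator g ab
          = ∑ ab ∈ n.divisorsAntidiagonal, (μ ab.1 : ℝ) * (y ^ n / n) := by
            apply Finset.sum_congr rfl
            intro ab hab
            have h1 := (Nat.mem_divisorsAntidiagonal.mp hab).1
            have h1' : ab ∈ {ab : ℕ × ℕ | ab.1 * ab.2 = n} := h1
            rw [Set.indicator_of_mem h1', hg]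
            simp only [h1]
            ring
        _ = (∑ ab ∈ n.divisorsAntidiagonal, ((μ ab.1 : ℤ) : ℝ)) * (y ^ n / n) := by
            rw [Finset.sum_mul]
        _ = (if n = 1 then 1 else 0) * (y ^ n / n) := by rw [divisor_moebius_sum n]
        _ = if n = 1 then y else 0 := by
            split <;> simp_all
    -- end fiber computation
  set e := Equiv.sigmaFiberEquiv (fun ab : ℕ × ℕ => ab.1 * ab.2) with he
  have hS' : HasSum (g ∘ e) S := e.hasSum_iff.mpr hS
  have hF : HasSum (fun n : ℕ => if n = 1 then y else 0) S := hS'.sigma hfib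
  have hSy : S = y := hF.unique (hasSum_ite_eq 1 y)
  rw [hSy] at hS
  set i : ℕ × ℕ → ℕ × ℕ := fun km => (km.1 + 1, km.2 + 1) with hi
  have hinj : Function.Injective i := by
    rintro ⟨a, b⟩ ⟨c, d⟩ h
    simp only [hi, Prod.mk.injEq] at h
    exact Prod.ext (by omega) (by omega)
  have hoff : ∀ x ∉ Set.range i, g x = 0 := by
    rintro ⟨a, b⟩ hx
    rcases Nat.eq_zero_or_pos a with rfl | ha
    · exact hgz _ (Or.inl rfl)
    rcases Nat.eq_zero_or_pos b with rfl | hb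
    · exact hgz _ (Or.inr rfl)
    exact absurd ⟨(a - 1, b - 1), by simp only [hi]; exact Prod.ext (by omega) (by omega)⟩ hx
  exact (hinj.hasSum_iff hoff).mpr hS

lemma abs_moebius_term_le {y : ℝ} (hy : 0 ≤ y) (k m : ℕ) :
    |(μ (k + 1) : ℝ) * y ^ ((k + 1) * (m + 1)) / (((k + 1) * (m + 1) : ℕ) : ℝ)|
      ≤ y ^ ((k + 1) * (m + 1)) := by
  rw [abs_div, abs_mul, abs_pow, abs_of_nonneg hy]
  have hn : (1:ℝ) ≤ |((((k + 1) * (m + 1) : ℕ)) : ℝ)| := by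
    rw [abs_of_nonneg (by positivity)]
    exact_mod_cast Nat.one_le_iff_ne_zero.mpr (by positivity)
  calc |(μ (k+1) : ℝ)| * y ^ ((k+1)*(m+1)) / |((((k + 1) * (m + 1) : ℕ)) : ℝ)|
      ≤ |(μ (k+1) : ℝ)| * y ^ ((k+1)*(m+1)) / 1 :=
        div_le_div_of_nonneg_left (by positivity) one_pos hn
    _ = |(μ (k+1) : ℝ)| * y ^ ((k+1)*(m+1)) := by ring
    _ ≤ 1 * y ^ ((k+1)*(m+1)) := by
        apply mul_le_mul_of_nonneg_right ?_ (by positivity)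
        exact_mod_cast abs_moebius_le_one
    _ = y ^ ((k+1)*(m+1)) := one_mul _

set_option maxHeartbeats 2000000 in
/-- For real `s > 1`, `P(s) = ∑_{k=1}^∞ (μ(k)/k) log ζ(ks)`. -/
theorem primeZeta_eq_sum_moebius_log_zeta (s : ℝ) (hs : 1 < s) :
    (primeZeta s : ℂ) =
      ∑' k : ℕ, ((moebius (k + 1) : ℂ) / (k + 1)) *
        Complex.log (riemannZeta (((k : ℝ) + 1) * s)) := by
  have hx := prime_rpow_facts s hs
  set x : Nat.Primes → ℝ := fun p => (p : ℝ) ^ (-s) with hxdef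
  set T : Nat.Primes × ℕ × ℕ → ℝ := fun q =>
    (μ (q.2.1 + 1) : ℝ) * (x q.1) ^ ((q.2.1 + 1) * (q.2.2 + 1)) /
      (((q.2.1 + 1) * (q.2.2 + 1) : ℕ) : ℝ) with hT
  have hxs : Summable x := Nat.Primes.summable_rpow.mpr (by linarith)
  -- Step 1 : summability of the triple sum
  have hTsum : Summable T := by
    have hhalf : Summable (fun km : ℕ × ℕ => ((1:ℝ)/2) ^ km.1 * ((1:ℝ)/2) ^ km.2) :=
      (summable_geometric_of_lt_one (by norm_num) (by norm_num)).mul_of_nonneg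
        (summable_geometric_of_lt_one (by norm_num) (by norm_num))
        (fun n => by positivity) (fun n => by positivity)
    have hbd : Summable (fun q : Nat.Primes × ℕ × ℕ =>
        x q.1 * (((1:ℝ)/2) ^ q.2.1 * ((1:ℝ)/2) ^ q.2.2)) :=
      hxs.mul_of_nonneg hhalf (fun p => (hx p).1.le) (fun km => by positivity)
    refine Summable.of_abs (hbd.of_nonneg_of_le (fun _ => abs_nonneg _) ?_)
    rintro ⟨p, k, m⟩
    obtain ⟨h0, hh⟩ := hx p
    have hx1 : x p ≤ 1 := by linarith
    calc |T (p, k, m)| ≤ (x p) ^ ((k + 1) * (m + 1)) := abs_moebius_term_le h0.le k m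
      _ ≤ (x p) ^ (k + m + 1) := pow_le_pow_of_le_one h0.le hx1 (by nlinarith)
      _ = x p * ((x p) ^ k * (x p) ^ m) := by ring
      _ ≤ x p * (((1:ℝ)/2) ^ k * ((1:ℝ)/2) ^ m) := by
          apply mul_le_mul_of_nonneg_left ?_ h0.le
          exact mul_le_mul (pow_le_pow_left₀ h0.le hh k) (pow_le_pow_left₀ h0.le hh m)
            (by positivity) (by positivity)
  -- Step 2 : fiberwise over primes
  have hfib_p : ∀ p : Nat.Primes, HasSum (fun km : ℕ × ℕ => T (p, km)) (x p) := by
    intro p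
    obtain ⟨h0, hh⟩ := hx p
    have h := hasSum_moebius_pow (y := x p) h0 (by linarith)
    exact h
  have hT1 : HasSum T (primeZeta s) := by
    obtain ⟨S, hS⟩ := hTsum
    have hxS : HasSum x S := hS.prod_fiberwise hfib_p
    have hxps : HasSum x (primeZeta s) := by rw [primeZeta]; exact hxs.hasSum
    rwa [hxS.unique hxps] at hS
  -- Step 3 : reindex
  let e : ℕ × Nat.Primes × ℕ ≃ Nat.Primes × ℕ × ℕ :=
    ⟨fun q => (q.2.1, q.1, q.2.2), fun q => (q.2.1, q.1, q.2.2), fun q => rfl, fun q => rfl⟩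
  have hT2 : HasSum (T ∘ e) (primeZeta s) := e.hasSum_iff.mpr hT1
  -- Step 4 : fiberwise over k
  have hfib_k : ∀ k : ℕ, HasSum (fun pm : Nat.Primes × ℕ => (T ∘ e) (k, pm))
      ((μ (k + 1) : ℝ) / ((k : ℝ) + 1) *
        ∑' p : Nat.Primes, -Real.log (1 - (p : ℝ) ^ (-(((k : ℝ) + 1) * s)))) := by
    intro k
    set t := ((k : ℝ) + 1) * s with htdef
    have hk0 : (0:ℝ) ≤ (k : ℝ) := Nat.cast_nonneg k
    have ht : 1 < t := by rw [htdef]; nlinarith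
    have hxy : ∀ p : Nat.Primes, ∀ m : ℕ,
        (x p) ^ ((k + 1) * (m + 1)) = ((p : ℝ) ^ (-t)) ^ (m + 1) := by
      intro p m
      have hp0 : (0:ℝ) ≤ ((p : ℕ) : ℝ) := by positivity
      rw [hxdef]
      rw [← Real.rpow_natCast ((p : ℝ) ^ (-s)) ((k + 1) * (m + 1)),
        ← Real.rpow_natCast ((p : ℝ) ^ (-t)) (m + 1),
        ← Real.rpow_mul hp0, ← Real.rpow_mul hp0]
      congr 1
      rw [htdef]
      push_cast
      ring
    have hTe : (fun pm : Nat.Primes × ℕ => (T ∘ e) (k, pm)) =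
        fun pm : Nat.Primes × ℕ => ((μ (k + 1) : ℝ) / ((k : ℝ) + 1)) *
          (((pm.1 : ℝ) ^ (-t)) ^ (pm.2 + 1) / ((pm.2 : ℝ) + 1)) := by
      funext pm
      show T (pm.1, k, pm.2) = _
      rw [hT]
      simp only
      rw [hxy pm.1 pm.2, Nat.cast_mul, div_mul_div_comm]
      norm_cast
    rw [hTe]
    have hin : ∀ p : Nat.Primes, HasSum (fun m : ℕ => ((p : ℝ) ^ (-t)) ^ (m + 1) / ((m : ℝ) + 1))
        (-Real.log (1 - (p : ℝ) ^ (-t))) := by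
      intro p
      obtain ⟨h0, hh⟩ := prime_rpow_facts t ht p
      exact Real.hasSum_pow_div_log_of_abs_lt_one (by rw [abs_of_nonneg h0.le]; linarith)
    have hpair : Summable (fun pm : Nat.Primes × ℕ =>
        ((μ (k + 1) : ℝ) / ((k : ℝ) + 1)) *
          (((pm.1 : ℝ) ^ (-t)) ^ (pm.2 + 1) / ((pm.2 : ℝ) + 1))) := by
      have h := hT2.summable.prod_factor k
      rwa [hTe] at h
    have hfinal : (∑' pm : Nat.Primes × ℕ, ((μ (k + 1) : ℝ) / ((k : ℝ) + 1)) *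
        (((pm.1 : ℝ) ^ (-t)) ^ (pm.2 + 1) / ((pm.2 : ℝ) + 1))) =
        (μ (k + 1) : ℝ) / ((k : ℝ) + 1) *
          ∑' p : Nat.Primes, -Real.log (1 - (p : ℝ) ^ (-t)) := by
      rw [Summable.tsum_prod hpair]
      rw [tsum_congr (fun p : Nat.Primes => ((hin p).mul_left _).tsum_eq)]
      exact tsum_mul_left
    have h := hpair.hasSum
    rwa [hfinal] at h
  -- Step 5 : conclude
  have hmain : HasSum (fun k : ℕ => (μ (k + 1) : ℝ) / ((k : ℝ) + 1) *
      ∑' p : Nat.Primes, -Real.log (1 - (p : ℝ) ^ (-(((k : ℝ) + 1) * s))))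
      (primeZeta s) := hT2.prod_fiberwise hfib_k
  rw [← hmain.tsum_eq, Complex.ofReal_tsum]
  apply tsum_congr
  intro k
  have hk0 : (0:ℝ) ≤ (k : ℝ) := Nat.cast_nonneg k
  have ht : 1 < ((k : ℝ) + 1) * s := by nlinarith
  rw [Complex.ofReal_mul, ← log_riemannZeta_eq' _ ht]
  push_cast
  ring
end

section
/- The function f(z) = Σ_{k=1}^∞ 2^{-k}/(1 + 2^k z), viewed as a function of a complex variable z, cannot be written in the form γ(z)·log₂(z) + δ(z) on the punctured unit disk 0 < |z| < 1 with γ, δ analytic on the open unit disk, because f has poles at z = -2^{-k} for each k ≥ 1 while γ(z)log₂(z) + δ(z) has no poles in 0 < |z| < 1. -/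
open Metric

/-- The complex extension `f(z) = ∑_{k=1}^∞ 2^{-k}/(1 + 2^k z)`. -/
noncomputable def brentFC (z : ℂ) : ℂ :=
  ∑' k : ℕ, ((2 : ℂ) ^ (k + 1))⁻¹ / (1 + 2 ^ (k + 1) * z)


lemma denom_lb (z : ℂ) (hz : 3/8 ≤ ‖z‖) (k : ℕ) :
    (1/2) * (2:ℝ)^k ≤ ‖1 + (2:ℂ)^(k+2) * z‖ := by
  have h1 : ‖(2:ℂ)^(k+2) * z‖ = 2^(k+2) * ‖z‖ := by
    rw [norm_mul, norm_pow]; norm_num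
  have h2 : ‖1 + (2:ℂ)^(k+2)*z‖ ≥ ‖(2:ℂ)^(k+2)*z‖ - ‖(1:ℂ)‖ := by
    have := norm_sub_norm_le ((2:ℂ)^(k+2)*z) (-1)
    simpa [add_comm, sub_neg_eq_add, add_comm ((2:ℂ)^(k+2)*z) 1] using this
  rw [h1] at h2
  have h3 : (2:ℝ)^(k+2) * (3/8) ≤ 2^(k+2) * ‖z‖ := by
    apply mul_le_mul_of_nonneg_left hz (by positivity)
  have h4 : (1/2) * (2:ℝ)^k + 1 ≤ 2^(k+2) * (3/8) := by
    have he : (2:ℝ)^(k+2) = 4 * 2^k := by ring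
    rw [he]
    have : (1:ℝ) ≤ 2^k := one_le_pow₀ (by norm_num)
    nlinarith
  simp only [norm_one] at h2
  linarith

lemma term_bound (z : ℂ) (hz : 3/8 ≤ ‖z‖) (k : ℕ) :
    ‖((2:ℂ)^(k+2))⁻¹ / (1 + 2^(k+2) * z)‖ ≤ (1/2) * (1/4)^k := by
  have hd := denom_lb z hz k
  have hdpos : (0:ℝ) < ‖1 + (2:ℂ)^(k+2)*z‖ := lt_of_lt_of_le (by positivity) hd
  have h2 : ‖(2:ℂ)‖ = 2 := by norm_num
  rw [norm_div, norm_inv, norm_pow, h2, div_le_iff₀ hdpos]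
  calc ((2:ℝ)^(k+2))⁻¹ = (1/2)*(1/4)^k * ((1/2)*2^k) := by
        have h14 : ((1:ℝ)/4)^k = ((2:ℝ)^k)⁻¹ * ((2:ℝ)^k)⁻¹ := by
          rw [← mul_inv, ← mul_pow, one_div, inv_pow]; norm_num
        have h2k : (0:ℝ) < 2^k := by positivity
        rw [h14, pow_add]
        field_simp
      _ ≤ (1/2)*(1/4)^k * ‖1 + (2:ℂ)^(k+2)*z‖ := by
        apply mul_le_mul_of_nonneg_left hd (by positivity)

lemma summable_geo : Summable (fun k : ℕ => (1/2:ℝ) * (1/4)^k) :=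
  (summable_geometric_of_lt_one (by norm_num) (by norm_num)).mul_left _

lemma summable_brent (z : ℂ) (hz : 3/8 ≤ ‖z‖) :
    Summable (fun k : ℕ => ((2:ℂ)^(k+1))⁻¹ / (1 + 2^(k+1)*z)) := by
  rw [← summable_nat_add_iff 1]
  apply Summable.of_norm_bounded summable_geo
  intro k
  exact term_bound z hz k

lemma tail_tsum_bound (z : ℂ) (hz : 3/8 ≤ ‖z‖) :
    ‖∑' k : ℕ, ((2:ℂ)^(k+2))⁻¹ / (1 + 2^(k+2)*z)‖ ≤ 2/3 := by
  have hs : HasSum (fun k : ℕ => (1/2:ℝ) * (1/4)^k) ((1/2) * (1-1/4)⁻¹) :=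
    (hasSum_geometric_of_lt_one (by norm_num) (by norm_num)).mul_left _
  have h23 : (1/2:ℝ)*((1:ℝ)-1/4)⁻¹ = 2/3 := by norm_num
  rw [h23] at hs
  exact tsum_of_norm_bounded hs (term_bound z hz)

lemma brent_blowup (n : ℕ) (hn : 8 ≤ n) :
    (n:ℝ)/4 - 2/3 ≤ ‖brentFC (((n:ℝ)⁻¹ - 1/2 : ℝ) : ℂ)‖ := by
  set z : ℂ := (((n:ℝ)⁻¹ - 1/2 : ℝ) : ℂ) with hzdef
  have hnpos : (0:ℝ) < n := by positivity
  have hinv : (n:ℝ)⁻¹ ≤ 1/8 := by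
    rw [inv_le_comm₀ hnpos (by norm_num)]
    exact_mod_cast by simpa using hn
  have hinv0 : (0:ℝ) < (n:ℝ)⁻¹ := by positivity
  have hznorm : ‖z‖ = 1/2 - (n:ℝ)⁻¹ := by
    rw [hzdef, Complex.norm_real, Real.norm_eq_abs, abs_of_nonpos (by linarith)]
    ring
  have hz38 : 3/8 ≤ ‖z‖ := by rw [hznorm]; linarith
  have hzc : z = (n:ℂ)⁻¹ - 1/2 := by push_cast [hzdef]; ring
  have hsum := summable_brent z hz38
  have hsplit : brentFC z = (2:ℂ)⁻¹/(1+2*z) + ∑' k : ℕ, ((2:ℂ)^(k+2))⁻¹ / (1 + 2^(k+2)*z) := by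
    rw [brentFC, Summable.tsum_eq_zero_add hsum]
    have e1 : ((2:ℂ)^(0+1))⁻¹ / (1 + 2^(0+1) * z) = (2:ℂ)⁻¹/(1+2*z) := by norm_num
    rw [e1]
  have hden : 1 + 2*z = 2*(n:ℂ)⁻¹ := by rw [hzc]; ring
  have hn0 : (n:ℂ) ≠ 0 := by exact_mod_cast hnpos.ne'
  have hfirst : ‖(2:ℂ)⁻¹/(1+2*z)‖ = (n:ℝ)/4 := by
    rw [hden, norm_div, norm_inv, norm_mul, norm_inv, Complex.norm_natCast]
    have h2 : ‖(2:ℂ)‖ = 2 := by norm_num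
    rw [h2]
    rw [div_eq_div_iff (by positivity) (by norm_num : (4:ℝ) ≠ 0)]
    field_simp
    norm_num
  calc (n:ℝ)/4 - 2/3 ≤ ‖(2:ℂ)⁻¹/(1+2*z)‖ - ‖∑' k : ℕ, ((2:ℂ)^(k+2))⁻¹ / (1 + 2^(k+2)*z)‖ := by
        rw [hfirst]; linarith [tail_tsum_bound z hz38]
      _ ≤ ‖brentFC z‖ := by
        rw [hsplit]
        have := norm_sub_norm_le ((2:ℂ)⁻¹/(1+2*z)) (-(∑' k : ℕ, ((2:ℂ)^(k+2))⁻¹ / (1 + 2^(k+2)*z)))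
        simpa [sub_neg_eq_add] using this

/-- `f` cannot be written as `γ(z) log₂ z + δ(z)` on the punctured unit disk
(away from the poles of `f`) with `γ, δ` analytic on the unit disk, since `f`
has poles at `z = -2^{-k}`. -/
theorem brentFC_not_log_plus_analytic :
    ¬ ∃ γ δ : ℂ → ℂ, AnalyticOn ℂ γ (ball 0 1) ∧ AnalyticOn ℂ δ (ball 0 1) ∧
      ∀ z ∈ ball (0 : ℂ) 1, z ≠ 0 → (∀ k : ℕ, z ≠ -((2 : ℂ) ^ (k + 1))⁻¹) →
        brentFC z = γ z * (Complex.log z / Real.log 2) + δ z := by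
  rintro ⟨γ, δ, hγ, hδ, h⟩
  -- the compact set on which we bound γ and δ
  set S : Set ℂ := closedBall (-(1/2) : ℂ) (1/8) with hS
  have hsub : S ⊆ ball 0 1 := by
    intro w hw
    rw [hS, mem_closedBall, dist_eq_norm] at hw
    rw [mem_ball, dist_eq_norm, sub_zero]
    calc ‖w‖ = ‖(w - (-(1/2))) + (-(1/2) : ℂ)‖ := by ring_nf
      _ ≤ ‖w - (-(1/2))‖ + ‖(-(1/2) : ℂ)‖ := norm_add_le _ _
      _ ≤ 1/8 + 1/2 := by
          have : ‖(-(1/2) : ℂ)‖ = 1/2 := by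
            simp
          linarith
      _ < 1 := by norm_num
  have hScpt : IsCompact S := isCompact_closedBall _ _
  have hSmem : (-(1/2) : ℂ) ∈ S := mem_closedBall_self (by norm_num)
  obtain ⟨M, hM⟩ := hScpt.exists_bound_of_continuousOn (hγ.continuousOn.mono hsub)
  obtain ⟨N, hN⟩ := hScpt.exists_bound_of_continuousOn (hδ.continuousOn.mono hsub)
  have hM0 : 0 ≤ M := le_trans (norm_nonneg _) (hM _ hSmem)
  have hN0 : 0 ≤ N := le_trans (norm_nonneg _) (hN _ hSmem)
  obtain ⟨n, hnBig⟩ := exists_nat_gt (48*M + 4*N + 12 : ℝ)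
  have hn8 : 8 ≤ n := by
    have : (8:ℝ) ≤ (n:ℝ) := by linarith
    exact_mod_cast this
  have hnpos : (0:ℝ) < n := by positivity
  have hinv : (n:ℝ)⁻¹ ≤ 1/8 := by
    rw [inv_le_comm₀ hnpos (by norm_num)]
    exact_mod_cast by simpa using hn8
  have hinv0 : (0:ℝ) < (n:ℝ)⁻¹ := by positivity
  set x : ℝ := (n:ℝ)⁻¹ - 1/2 with hx
  set z : ℂ := (x : ℂ) with hz
  have hznorm : ‖z‖ = 1/2 - (n:ℝ)⁻¹ := by
    rw [hz, Complex.norm_real, Real.norm_eq_abs, abs_of_nonpos (by rw [hx]; linarith)]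
    rw [hx]; ring
  have hz38 : 3/8 ≤ ‖z‖ := by rw [hznorm]; linarith
  have hz12 : ‖z‖ ≤ 1/2 := by rw [hznorm]; linarith
  have hball : z ∈ ball (0:ℂ) 1 := by
    rw [mem_ball, dist_eq_norm, sub_zero]; linarith
  have hzS : z ∈ S := by
    rw [hS, mem_closedBall, dist_eq_norm]
    have : z - (-(1/2)) = (((n:ℝ)⁻¹ : ℝ) : ℂ) := by rw [hz, hx]; push_cast; ring
    rw [this, Complex.norm_real, Real.norm_eq_abs, abs_of_pos hinv0]
    exact hinv
  have hz0 : z ≠ 0 := by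
    rw [hz]
    exact_mod_cast Complex.ofReal_ne_zero.mpr (by rw [hx]; intro hc; rw [sub_eq_zero] at hc; linarith)
  have hpoles : ∀ k : ℕ, z ≠ -((2 : ℂ) ^ (k + 1))⁻¹ := by
    intro k heq
    have hcast : -((2 : ℂ) ^ (k + 1))⁻¹ = ((-((2:ℝ)^(k+1))⁻¹ : ℝ) : ℂ) := by push_cast; ring
    rw [hz, hcast, Complex.ofReal_inj] at heq
    rcases k with _ | k
    · rw [hx] at heq; norm_num at heq; linarith
    · have h4 : (4:ℝ) ≤ 2^(k+2) := by
        calc (4:ℝ) = 4 * 1 := by norm_num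
          _ ≤ 4 * 2^k := by nlinarith [one_le_pow₀ (by norm_num : (1:ℝ) ≤ 2) (n := k)]
          _ = 2^(k+2) := by ring
      have hip : ((2:ℝ)^(k+2))⁻¹ ≤ 1/4 := by
        rw [inv_le_comm₀ (by positivity) (by norm_num)]
        linarith
      have hxle : x ≤ -(3/8) := by rw [hx]; linarith
      rw [heq] at hxle
      have : (0:ℝ) < ((2:ℝ)^(k+2))⁻¹ := by positivity
      linarith
  -- bound on the logarithm
  have hlog : ‖Complex.log z‖ ≤ 6 := by
    have habs := Complex.norm_le_abs_re_add_abs_im (Complex.log z)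
    rw [Complex.log_re, Complex.log_im] at habs
    have harg : |Complex.arg z| ≤ Real.pi := Complex.abs_arg_le_pi z
    have hpi : Real.pi ≤ 4 := Real.pi_le_four
    have hlogub : Real.log (‖z‖) ≤ 0 := by
      apply Real.log_nonpos (by positivity)
      linarith
    have hloglb : -2 ≤ Real.log (‖z‖) := by
      have h83 : Real.log ((8:ℝ)/3) ≤ 8/3 - 1 := Real.log_le_sub_one_of_pos (by norm_num)
      have : Real.log (3/8 : ℝ) ≤ Real.log (‖z‖) := by
        apply Real.log_le_log (by norm_num)
        linarith
      have hneg : Real.log (3/8 : ℝ) = -Real.log ((8:ℝ)/3) := by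
        rw [← Real.log_inv]; norm_num
      linarith
    have h2 : |Real.log (‖z‖)| ≤ 2 := abs_le.mpr ⟨hloglb, by linarith⟩
    have habs' : ‖Complex.log z‖ ≤ |Real.log (‖z‖)| + |z.arg| := habs
    linarith
  have hl2 : (1/2 : ℝ) ≤ Real.log 2 := by
    have := Real.log_two_gt_d9; linarith
  -- the contradiction
  have heq := h z hball hz0 hpoles
  have hnormval : ‖γ z * (Complex.log z / (Real.log 2 : ℂ))‖
      = ‖γ z‖ * (‖Complex.log z‖ / Real.log 2) := by
    rw [norm_mul, norm_div, Complex.norm_real, Real.norm_eq_abs,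
      abs_of_pos (Real.log_pos one_lt_two)]
  have hdivle : ‖Complex.log z‖ / Real.log 2 ≤ 12 := by
    rw [div_le_iff₀ (by linarith)]
    linarith
  have hub : ‖brentFC z‖ ≤ M * 12 + N := by
    rw [heq]
    calc ‖γ z * (Complex.log z / (Real.log 2 : ℂ)) + δ z‖
        ≤ ‖γ z * (Complex.log z / (Real.log 2 : ℂ))‖ + ‖δ z‖ := norm_add_le _ _
      _ = ‖γ z‖ * (‖Complex.log z‖ / Real.log 2) + ‖δ z‖ := by rw [hnormval]
      _ ≤ M * 12 + N := by
          have h1 : ‖γ z‖ * (‖Complex.log z‖ / Real.log 2) ≤ M * 12 :=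
            mul_le_mul (hM z hzS) hdivle (by positivity) hM0
          have h2 : ‖δ z‖ ≤ N := hN z hzS
          linarith
  have hlb := brent_blowup n hn8
  rw [← hx, ← hz] at hlb
  linarith
end

section
/- For 0 < Re(s) < 1, the Mellin transform of f(x) = Σ_{k=1}^∞ 2^{-k}/(1 + 2^k x) equals (π/sin(πs)) / (2^{s+1} - 1). -/
open Real Set

section aux
open MeasureTheory Complex


lemma phi_image : (fun y : ℝ => y / (1 + y)) '' Ioi 0 = Ioo 0 1 := by
  ext x
  constructor
  · rintro ⟨y, hy, rfl⟩
    have hy' : (0:ℝ) < y := hy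
    have h1y : (0:ℝ) < 1 + y := by linarith
    refine ⟨by positivity, ?_⟩
    rw [div_lt_one h1y]; linarith
  · rintro ⟨hx0, hx1⟩
    refine ⟨x / (1 - x), ?_, ?_⟩
    · have : (0:ℝ) < 1 - x := by linarith
      exact div_pos hx0 this
    · have h : (1:ℝ) - x ≠ 0 := by linarith
      field_simp
      ring

lemma phi_deriv {y : ℝ} (hy : y ∈ Ioi (0:ℝ)) :
    HasDerivWithinAt (fun y : ℝ => y / (1 + y)) (((1+y)^2)⁻¹) (Ioi 0) y := by
  have hy' : (0:ℝ) < y := hy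
  have h1y : (1:ℝ) + y ≠ 0 := by positivity
  have := (hasDerivAt_id y).div ((hasDerivAt_const y (1:ℝ)).add (hasDerivAt_id y)) h1y
  simp only [one_mul, mul_one, zero_add, id_eq] at this
  exact (this.hasDerivWithinAt.congr_deriv (by simp)).congr_of_mem (fun z _ => rfl) hy

lemma phi_inj : InjOn (fun y : ℝ => y / (1 + y)) (Ioi 0) := by
  intro a ha b hb h
  have ha' : (1:ℝ) + a ≠ 0 := by have : (0:ℝ) < a := ha; positivity
  have hb' : (1:ℝ) + b ≠ 0 := by have : (0:ℝ) < b := hb; positivity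
  field_simp at h
  linarith

lemma cpow_ofReal_div {a b : ℝ} (ha : 0 ≤ a) (hb : 0 < b) (w : ℂ) :
    ((a / b : ℝ) : ℂ) ^ w = (a:ℂ) ^ w / (b:ℂ) ^ w := by
  rw [div_eq_mul_inv, Complex.ofReal_mul, mul_cpow_ofReal_nonneg ha (inv_nonneg.mpr hb.le), Complex.ofReal_inv,
    Complex.inv_cpow _ _ (by rw [Complex.arg_ofReal_of_nonneg hb.le]; exact Real.pi_ne_zero.symm),
    div_eq_mul_inv]

lemma integrableOn_auxR {σ : ℝ} (h0 : 0 < σ) (h1 : σ < 1) {c : ℝ} (hc : 0 < c) :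
    IntegrableOn (fun x : ℝ => x ^ (σ - 1) / (1 + c * x)) (Ioi 0) := by
  have hmeas : ∀ (S : Set ℝ), S ⊆ Ioi 0 → MeasurableSet S →
      AEStronglyMeasurable (fun x : ℝ => x ^ (σ - 1) / (1 + c * x)) (volume.restrict S) := by
    intro S hS hSm
    refine (ContinuousOn.aestronglyMeasurable ?_ hSm)
    apply ContinuousOn.div
    · exact fun x hx => (Real.continuousAt_rpow_const x (σ-1)
        (Or.inl (ne_of_gt (hS hx)))).continuousWithinAt
    · exact (continuous_const.add (continuous_const.mul continuous_id)).continuousOn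
    · intro x hx
      have : (0:ℝ) < x := hS hx
      positivity
  rw [← Ioc_union_Ioi_eq_Ioi (zero_le_one (α := ℝ))]
  refine IntegrableOn.union ?_ ?_
  · refine Integrable.mono' (g := fun x : ℝ => x ^ (σ - 1)) ?_
      (hmeas _ Ioc_subset_Ioi_self measurableSet_Ioc) ?_
    · exact (intervalIntegral.intervalIntegrable_rpow' (by linarith)).1
    · rw [ae_restrict_iff' measurableSet_Ioc]
      filter_upwards with x hx
      obtain ⟨hx0, hx1⟩ := hx
      have h1cx : (1:ℝ) ≤ 1 + c * x := by nlinarith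
      rw [Real.norm_eq_abs, _root_.abs_of_nonneg (show (0:ℝ) ≤ x ^ (σ - 1) / (1 + c * x) by positivity)]
      calc x ^ (σ-1) / (1 + c * x) ≤ x ^ (σ-1) / 1 := by
            apply div_le_div_of_nonneg_left (by positivity) one_pos h1cx
        _ = x ^ (σ-1) := by rw [div_one]
  · refine Integrable.mono' (g := fun x : ℝ => c⁻¹ * x ^ (σ - 2)) ?_
      (hmeas _ (fun x hx => mem_Ioi.mpr (lt_trans one_pos (mem_Ioi.mp hx))) measurableSet_Ioi) ?_
    · exact ((integrableOn_Ioi_rpow_iff one_pos).mpr (by linarith)).const_mul _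
    · rw [ae_restrict_iff' measurableSet_Ioi]
      filter_upwards with x hx
      have hx1 : (1:ℝ) < x := hx
      have hx0 : (0:ℝ) < x := lt_trans one_pos hx1
      rw [Real.norm_eq_abs, _root_.abs_of_nonneg (show (0:ℝ) ≤ x ^ (σ - 1) / (1 + c * x) by positivity)]
      have hcx : 0 < c * x := by positivity
      calc x ^ (σ-1) / (1 + c * x) ≤ x ^ (σ-1) / (c * x) := by
            apply div_le_div_of_nonneg_left (by positivity) hcx (by linarith)
        _ = c⁻¹ * x ^ (σ-2) := by
            rw [show σ - 1 = (σ - 2) + 1 by ring, Real.rpow_add hx0, Real.rpow_one]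
            field_simp

lemma mellin_one_add (s : ℂ) (h0 : 0 < s.re) (h1 : s.re < 1) :
    ∫ x in Ioi (0:ℝ), (x:ℂ)^(s-1) / (1 + x) = π / Complex.sin (π * s) := by
  have h1s : 0 < (1 - s).re := by
    simp only [Complex.sub_re, Complex.one_re]; linarith
  have key : Complex.Gamma s * Complex.Gamma (1 - s) = Complex.betaIntegral s (1-s) := by
    have := Complex.Gamma_mul_Gamma_eq_betaIntegral h0 h1s
    rwa [add_sub_cancel, Complex.Gamma_one, one_mul] at this
  rw [← Complex.Gamma_mul_Gamma_one_sub, key, Complex.betaIntegral,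
    intervalIntegral.integral_of_le zero_le_one, MeasureTheory.integral_Ioc_eq_integral_Ioo,
    ← phi_image,
    integral_image_eq_integral_abs_deriv_smul measurableSet_Ioi (fun y hy => phi_deriv hy) phi_inj]
  refine (setIntegral_congr_fun measurableSet_Ioi fun y hy => ?_).symm
  have hy' : (0:ℝ) < y := hy
  have h1y : (0:ℝ) < 1 + y := by linarith
  have h1yC : ((1:ℂ) + y) ≠ 0 := by
    have := Complex.ofReal_ne_zero.mpr h1y.ne'
    push_cast at this ⊢
    exact this
  have e1 : ((y / (1+y) : ℝ) : ℂ) ^ (s - 1) = (y:ℂ)^(s-1) / ((1+y:ℝ):ℂ)^(s-1) :=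
    cpow_ofReal_div hy'.le h1y (s-1)
  have e2 : (1:ℂ) - ((y / (1+y) : ℝ) : ℂ) = ((1/(1+y) : ℝ) : ℂ) := by
    push_cast
    field_simp
    ring
  have e3 : ((1/(1+y) : ℝ) : ℂ) ^ ((1-s) - 1) = ((1+y:ℝ):ℂ) ^ s := by
    have h : (1-s) - 1 = -s := by ring
    rw [h, cpow_ofReal_div zero_le_one h1y, Complex.ofReal_one, Complex.one_cpow,
      Complex.cpow_neg, one_div, inv_inv]
  have hBC : ((1+y:ℝ):ℂ) ≠ 0 := by exact_mod_cast h1yC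
  have hBne : ((1+y:ℝ):ℂ) ^ (s-1) ≠ 0 := by
    rw [Complex.cpow_def_of_ne_zero hBC]
    exact Complex.exp_ne_zero _
  have e4 : ((1+y:ℝ):ℂ) ^ s = ((1+y:ℝ):ℂ) ^ (s-1) * ((1+y:ℝ):ℂ) := by
    nth_rewrite 1 [show s = (s-1)+1 by ring]
    rw [Complex.cpow_add _ _ hBC, Complex.cpow_one]
  have e5 : ((y:ℂ)^(s-1) / ((1+y:ℝ):ℂ)^(s-1)) * (((1+y:ℝ):ℂ)^(s-1) * ((1+y:ℝ):ℂ))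
      = (y:ℂ)^(s-1) * ((1+y:ℝ):ℂ) := by
    field_simp
  rw [e1, e2, e3, e4, abs_of_pos (by positivity), real_smul, e5]
  push_cast
  field_simp

lemma norm_auxC {s : ℂ} {c x : ℝ} (hc : 0 < c) (hx : 0 < x) :
    ‖(x:ℂ)^(s-1) / (1 + (c:ℂ) * x)‖ = x ^ (s.re - 1) / (1 + c * x) := by
  have h1 : (1:ℂ) + (c:ℂ) * x = ((1 + c * x : ℝ) : ℂ) := by push_cast; ring
  rw [norm_div, h1, Complex.norm_real, Real.norm_eq_abs,
    _root_.abs_of_nonneg (by positivity),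
    norm_cpow_eq_rpow_re_of_pos hx, Complex.sub_re,
    Complex.one_re]

lemma aesm_auxC (s : ℂ) {c : ℝ} (hc : 0 < c) :
    AEStronglyMeasurable (fun x : ℝ => (x:ℂ)^(s-1) / (1 + (c:ℂ) * x))
      (volume.restrict (Ioi 0)) := by
  refine ContinuousOn.aestronglyMeasurable ?_ measurableSet_Ioi
  apply ContinuousOn.div
  · exact fun x hx =>
      (Complex.continuousAt_ofReal_cpow_const x (s-1) (Or.inr (ne_of_gt hx))).continuousWithinAt
  · fun_prop
  · intro x hx
    have hx' : (0:ℝ) < x := hx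
    have : (1:ℂ) + (c:ℂ) * x = ((1 + c * x : ℝ) : ℂ) := by push_cast; ring
    rw [this]
    exact_mod_cast ne_of_gt (by positivity : (0:ℝ) < 1 + c * x)

lemma integrableOn_auxC (s : ℂ) (h0 : 0 < s.re) (h1 : s.re < 1) {c : ℝ} (hc : 0 < c) :
    IntegrableOn (fun x : ℝ => (x:ℂ)^(s-1) / (1 + (c:ℂ) * x)) (Ioi 0) := by
  refine Integrable.mono' (integrableOn_auxR h0 h1 hc) (aesm_auxC s hc) ?_
  rw [ae_restrict_iff' measurableSet_Ioi]
  filter_upwards with x hx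
  rw [norm_auxC hc hx]

lemma mellin_scaled (s : ℂ) (h0 : 0 < s.re) (h1 : s.re < 1) {c : ℝ} (hc : 0 < c) :
    ∫ x in Ioi (0:ℝ), (x:ℂ)^(s-1) / (1 + (c:ℂ) * x)
      = (c:ℂ)^(-s) * (π / Complex.sin (π * s)) := by
  have hcC : (c:ℂ) ≠ 0 := Complex.ofReal_ne_zero.mpr hc.ne'
  have base := integral_comp_mul_left_Ioi (fun x : ℝ => (x:ℂ)^(s-1) / (1 + x)) 0 hc
  rw [mul_zero, mellin_one_add s h0 h1] at base
  have congr1 : ∫ x in Ioi (0:ℝ), ((c * x : ℝ):ℂ)^(s-1) / (1 + (c:ℂ) * (x:ℝ))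
      = ∫ x in Ioi (0:ℝ), (c:ℂ)^(s-1) * ((x:ℂ)^(s-1) / (1 + (c:ℂ) * x)) := by
    refine setIntegral_congr_fun measurableSet_Ioi fun x hx => ?_
    have hx' : (0:ℝ) < x := hx
    rw [Complex.ofReal_mul, mul_cpow_ofReal_nonneg hc.le hx'.le]
    ring
  have lhs_eq : (∫ x in Ioi (0:ℝ), ((c * x : ℝ):ℂ)^(s-1) / (1 + (c:ℂ) * (x:ℝ)))
      = c⁻¹ • (↑π / Complex.sin (↑π * s)) := by
    rw [← base]
    refine setIntegral_congr_fun measurableSet_Ioi fun x hx => ?_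
    push_cast
    ring_nf
  rw [congr1, integral_const_mul] at lhs_eq
  have hcp : (c:ℂ)^(s-1) ≠ 0 := by
    rw [Complex.cpow_def_of_ne_zero hcC]; exact Complex.exp_ne_zero _
  have : ∫ x in Ioi (0:ℝ), (x:ℂ)^(s-1) / (1 + (c:ℂ) * x)
      = ((c:ℂ)^(s-1))⁻¹ * (c⁻¹ • (↑π / Complex.sin (↑π * s))) := by
    rw [← lhs_eq, ← mul_assoc, inv_mul_cancel₀ hcp, one_mul]
  rw [this, real_smul, Complex.ofReal_inv, ← Complex.cpow_neg_one (c:ℂ), ← Complex.cpow_neg,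
    ← mul_assoc, ← Complex.cpow_add _ _ hcC]
  congr 2
  ring

end aux

section main
open MeasureTheory Complex

/-- For `0 < Re s < 1`, the Mellin transform of
`f(x) = ∑_{k=1}^∞ 2^{-k}/(1+2^k x)` equals `(π / sin π s)/(2^{s+1}-1)`. -/
theorem mellin_brentF (s : ℂ) (h0 : 0 < s.re) (h1 : s.re < 1) :
    ∫ x in Ioi (0 : ℝ),
        (x : ℂ) ^ (s - 1) * ∑' k : ℕ, ((2 : ℂ) ^ (k + 1))⁻¹ / (1 + 2 ^ (k + 1) * (x : ℂ))
      = ((π : ℂ) / Complex.sin (π * s)) / (2 ^ (s + 1) - 1) := by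
  set σ := s.re with hσ
  set C : ℂ := (π : ℂ) / Complex.sin (π * s) with hC
  set F : ℕ → ℝ → ℂ := fun k x =>
    ((2:ℂ)^(k+1))⁻¹ * ((x:ℂ)^(s-1) / (1 + (((2:ℝ)^(k+1) : ℝ):ℂ) * x)) with hF
  have hck : ∀ k : ℕ, (0:ℝ) < (2:ℝ)^(k+1) := fun k => by positivity
  -- rewrite integrand as a tsum of F
  have step1 : ∀ x : ℝ,
      (x : ℂ) ^ (s - 1) * ∑' k : ℕ, ((2 : ℂ) ^ (k + 1))⁻¹ / (1 + 2 ^ (k + 1) * (x : ℂ))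
        = ∑' k : ℕ, F k x := by
    intro x
    rw [← tsum_mul_left]
    congr 1 with k
    rw [hF]
    push_cast
    ring
  simp_rw [step1]
  -- integrability of each F k
  have hInt : ∀ k : ℕ, IntegrableOn (F k) (Ioi 0) := by
    intro k
    exact ((integrableOn_auxC s h0 h1 (hck k)).const_mul _)
  -- norm of F k
  have hnorm : ∀ (k : ℕ) {x : ℝ}, 0 < x →
      ‖F k x‖ = ((2:ℝ)^(k+1))⁻¹ * (x ^ (σ - 1) / (1 + (2:ℝ)^(k+1) * x)) := by
    intro k x hx
    rw [hF]
    simp only [norm_mul, norm_inv, norm_pow, Complex.norm_ofNat]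
    rw [norm_auxC (hck k) hx]
  -- summability of the integrals of norms
  set J : ℝ := ∫ x in Ioi (0:ℝ), x ^ (σ - 1) / (1 + x) with hJ
  have hJint : IntegrableOn (fun x : ℝ => x ^ (σ - 1) / (1 + x)) (Ioi 0) := by
    have := integrableOn_auxR h0 h1 one_pos
    simpa using this
  have hbound : ∀ k : ℕ, (∫ x in Ioi (0:ℝ), ‖F k x‖) ≤ ((2:ℝ)^(k+1))⁻¹ * J := by
    intro k
    rw [hJ, ← integral_const_mul]
    refine setIntegral_mono_on (hInt k).norm (hJint.const_mul _) measurableSet_Ioi ?_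
    intro x hx
    have hx' : (0:ℝ) < x := hx
    rw [hnorm k hx']
    have h2 : (1:ℝ) + x ≤ 1 + (2:ℝ)^(k+1) * x := by
      have : (1:ℝ) ≤ (2:ℝ)^(k+1) := one_le_pow₀ one_le_two
      nlinarith
    gcongr
  have hSum : Summable fun k : ℕ => ∫ x in Ioi (0:ℝ), ‖F k x‖ := by
    refine Summable.of_nonneg_of_le (fun k => integral_nonneg fun x => norm_nonneg _)
      hbound ?_
    have : Summable fun k : ℕ => ((1/2:ℝ))^k * ((1/2) * J) :=
      (summable_geometric_of_lt_one (by norm_num) (by norm_num)).mul_right _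
    refine this.congr fun k => ?_
    rw [show ((2:ℝ)^(k+1))⁻¹ = (1/2:ℝ)^(k+1) by rw [one_div, inv_pow], pow_succ]
    ring
  -- interchange
  rw [← MeasureTheory.integral_tsum_of_summable_integral_norm hInt hSum]
  -- evaluate each integral
  have hval : ∀ k : ℕ, (∫ x in Ioi (0:ℝ), F k x)
      = (((2:ℂ)^(s+1))⁻¹)^(k+1) * C := by
    intro k
    rw [hF]
    simp only
    rw [integral_const_mul, mellin_scaled s h0 h1 (hck k)]
    have hcast : (((2:ℝ)^(k+1) : ℝ):ℂ) = (2:ℂ)^(k+1) := by push_cast; ring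
    have harg : (2:ℂ).arg = 0 := by
      rw [show (2:ℂ) = ((2:ℝ):ℂ) by norm_num]
      exact Complex.arg_ofReal_of_nonneg (by norm_num)
    rw [hcast, ← Complex.cpow_nat_mul' (x := (2:ℂ)) (n := k+1)
        (by rw [harg]; simpa using Real.pi_pos) (by rw [harg]; simpa using Real.pi_pos.le) (-s)]
    have key : ((2:ℂ)^(k+1))⁻¹ * (2:ℂ)^(((k+1:ℕ):ℂ) * -s) = (((2:ℂ)^(s+1))⁻¹)^(k+1) := by
      rw [inv_pow, ← Complex.cpow_nat_mul, ← Complex.cpow_natCast 2 (k+1), ← Complex.cpow_neg,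
        ← Complex.cpow_add _ _ (two_ne_zero), ← Complex.cpow_neg]
      congr 1
      push_cast
      ring
    rw [← mul_assoc, key]
  simp_rw [hval]
  -- sum the geometric series
  have hA : (2:ℂ)^(s+1) ≠ 0 := by
    rw [Complex.cpow_def_of_ne_zero two_ne_zero]
    exact Complex.exp_ne_zero _
  have hnormA : ‖((2:ℂ)^(s+1))⁻¹‖ < 1 := by
    rw [norm_inv, show (2:ℂ) = ((2:ℝ):ℂ) by norm_num,
      norm_cpow_eq_rpow_re_of_pos two_pos]
    have h2 : (1:ℝ) < (2:ℝ) ^ (s+1).re := by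
      rw [show (1:ℝ) = (2:ℝ) ^ (0:ℝ) by simp]
      apply Real.rpow_lt_rpow_left_iff one_lt_two |>.mpr
      simp only [Complex.add_re, Complex.one_re]
      linarith
    rw [inv_lt_one_iff₀]
    right
    exact h2
  have hA1 : (2:ℂ)^(s+1) - 1 ≠ 0 := by
    rw [sub_ne_zero]
    intro h
    rw [h] at hnormA
    simp at hnormA
  rw [tsum_mul_right]
  have hgeo : ∑' k : ℕ, (((2:ℂ)^(s+1))⁻¹)^(k+1)
      = ((2:ℂ)^(s+1))⁻¹ * (1 - ((2:ℂ)^(s+1))⁻¹)⁻¹ := by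
    simp_rw [pow_succ']
    rw [tsum_mul_left, tsum_geometric_of_norm_lt_one hnormA]
  rw [hgeo]
  rw [div_eq_mul_inv C, mul_comm]
  congr 1
  rw [mul_inv_eq_iff_eq_mul₀ (by
    intro h
    rw [sub_eq_zero] at h
    rw [← h] at hnormA
    norm_num at hnormA), inv_eq_iff_eq_inv, mul_inv, inv_inv]
  field_simp

end main
end

section
/- The periodic function P(t) = (2π/ln 2) Σ_{n=1}^∞ sin(2nπt)/sinh(2nπ²/ln 2) satisfies |P(t)| < 7.8 × 10^{-12} for all real t. -/
open Real

/-- The periodic fluctuation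
`P(t) = (2π/ln 2) ∑_{n=1}^∞ sin(2nπt)/sinh(2nπ²/ln 2)` satisfies
`|P(t)| < 7.8 × 10⁻¹²` for all real `t`. -/
theorem periodic_term_small (t : ℝ) :
    |(2 * π / Real.log 2) *
        ∑' n : ℕ, Real.sin (2 * ((n : ℝ) + 1) * π * t) /
          Real.sinh (2 * ((n : ℝ) + 1) * π ^ 2 / Real.log 2)|
      < 7.8e-12 := by
  have hlog2 : (0.6931471803 : ℝ) < Real.log 2 := Real.log_two_gt_d9
  have hlog2' : Real.log 2 < 0.6931471808 := Real.log_two_lt_d9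
  have hπ : (3.14159265358979323846 : ℝ) < π := Real.pi_gt_d20
  have hπ' : π < 3.14159265358979323847 := Real.pi_lt_d20
  have hlogpos : (0 : ℝ) < Real.log 2 := by linarith
  set a : ℝ := 2 * π ^ 2 / Real.log 2 with ha_def
  have ha : (28.4776 : ℝ) < a := by
    rw [ha_def, lt_div_iff₀ hlogpos]
    nlinarith
  have ha0 : (0 : ℝ) < a := by linarith
  -- lower bound on exp a
  have hexp1 : (2.7182818283 : ℝ) < Real.exp 1 := Real.exp_one_gt_d9
  have hexpfrac : (1.6119757139 : ℝ) ≤ Real.exp 0.4776 := by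
    have h := Real.sum_le_exp_of_nonneg (x := 0.4776) (by norm_num) 5
    have : ∑ i ∈ Finset.range 5, (0.4776 : ℝ) ^ i / (Nat.factorial i : ℝ) =
        1 + 0.4776 + 0.4776 ^ 2 / 2 + 0.4776 ^ 3 / 6 + 0.4776 ^ 4 / 24 := by
      norm_num [Finset.sum_range_succ, Nat.factorial]
    rw [this] at h
    nlinarith
  have hexp28 : (2.7182818283 : ℝ) ^ 28 ≤ Real.exp 28 := by
    have : Real.exp 28 = Real.exp 1 ^ 28 := by
      rw [← Real.exp_nat_mul]; norm_num
    rw [this]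
    exact pow_le_pow_left₀ (by norm_num) hexp1.le 28
  have hexpa : (2331331259874 : ℝ) ≤ Real.exp a := by
    have h1 : Real.exp (28 + 0.4776) ≤ Real.exp a := by
      apply Real.exp_le_exp.2; norm_num; linarith
    rw [Real.exp_add] at h1
    have h2 : (2.7182818283 : ℝ) ^ 28 * 1.6119757139 ≤ Real.exp 28 * Real.exp 0.4776 := by
      apply mul_le_mul hexp28 hexpfrac (by norm_num) (Real.exp_pos _).le
    have hnum : (2331331259874 : ℝ) ≤ 2.7182818283 ^ 28 * 1.6119757139 := by norm_num
    linarith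
  -- lower bound on sinh a
  have hsinh : (1165665629936 : ℝ) ≤ Real.sinh a := by
    rw [Real.sinh_eq]
    have h1 : Real.exp (-a) ≤ 1 := Real.exp_le_one_iff.2 (by linarith)
    linarith
  have hsinhpos : (0 : ℝ) < Real.sinh a := by linarith
  -- geometric ratio
  set r : ℝ := Real.exp (-a) with hr_def
  have hr0 : (0 : ℝ) ≤ r := (Real.exp_pos _).le
  have hr1 : r < 1 := Real.exp_lt_one_iff.2 (by linarith)
  have hrsmall : r ≤ 1e-8 := by
    rw [hr_def, Real.exp_neg]
    rw [inv_le_comm₀ (Real.exp_pos _) (by norm_num)]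
    calc (1e-8 : ℝ)⁻¹ = 1e8 := by norm_num
    _ ≤ 2331331259874 := by norm_num
    _ ≤ Real.exp a := hexpa
  -- termwise bound
  have hterm : ∀ n : ℕ,
      ‖Real.sin (2 * ((n : ℝ) + 1) * π * t) /
        Real.sinh (2 * ((n : ℝ) + 1) * π ^ 2 / Real.log 2)‖
      ≤ (Real.sinh a)⁻¹ * r ^ n := by
    intro n
    have harg : 2 * ((n : ℝ) + 1) * π ^ 2 / Real.log 2 = a + (n : ℝ) * a := by
      rw [ha_def]; ring
    have hna : (0 : ℝ) ≤ (n : ℝ) * a := by positivity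
    have hsinh_ge : Real.sinh a * Real.exp ((n : ℝ) * a) ≤ Real.sinh (a + (n : ℝ) * a) := by
      rw [Real.sinh_add, ← Real.cosh_add_sinh ((n : ℝ) * a)]
      have h1 : Real.sinh a ≤ Real.cosh a := by
        nlinarith [Real.cosh_sub_sinh a, Real.exp_pos (-a)]
      have h2 : (0 : ℝ) ≤ Real.sinh ((n : ℝ) * a) := Real.sinh_nonneg_iff.2 hna
      nlinarith
    have hden_pos : (0 : ℝ) < Real.sinh a * Real.exp ((n : ℝ) * a) := by positivity
    have hden_pos' : (0 : ℝ) < Real.sinh (a + (n : ℝ) * a) := lt_of_lt_of_le hden_pos hsinh_ge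
    rw [harg, norm_div, Real.norm_eq_abs, Real.norm_eq_abs,
      abs_of_pos hden_pos']
    have hsin : |Real.sin (2 * ((n : ℝ) + 1) * π * t)| ≤ 1 := Real.abs_sin_le_one _
    have key : |Real.sin (2 * ((n : ℝ) + 1) * π * t)| / Real.sinh (a + (n : ℝ) * a)
        ≤ 1 / (Real.sinh a * Real.exp ((n : ℝ) * a)) :=
      div_le_div₀ (by norm_num) hsin hden_pos hsinh_ge
    refine key.trans (le_of_eq ?_)
    rw [hr_def, ← Real.exp_nat_mul, one_div, mul_inv, ← Real.exp_neg]
    ring_nf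
  -- sum the geometric series
  have hgeo : HasSum (fun n : ℕ => (Real.sinh a)⁻¹ * r ^ n)
      ((Real.sinh a)⁻¹ * (1 - r)⁻¹) :=
    (hasSum_geometric_of_lt_one hr0 hr1).mul_left _
  have hsum := tsum_of_norm_bounded hgeo hterm
  rw [Real.norm_eq_abs] at hsum
  -- final numeric estimate
  have hC : (0 : ℝ) < 2 * π / Real.log 2 := by positivity
  rw [abs_mul, abs_of_pos hC]
  have hbound : 2 * π / Real.log 2 * ((Real.sinh a)⁻¹ * (1 - r)⁻¹) < 7.8e-12 := by
    have h1 : 2 * π / Real.log 2 < 2 * 3.14159265358979323847 / 0.6931471803 := by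
      exact div_lt_div₀ (by linarith) hlog2.le (by norm_num) (by norm_num)
    have h2 : (Real.sinh a)⁻¹ ≤ (1165665629936 : ℝ)⁻¹ :=
      inv_anti₀ (by norm_num) hsinh
    have h3 : (1 - r)⁻¹ ≤ (1 - 1e-8 : ℝ)⁻¹ := by
      apply inv_anti₀ (by norm_num)
      linarith
    have h4 : (0 : ℝ) < (1 - r)⁻¹ := by
      rw [inv_pos]; linarith
    calc 2 * π / Real.log 2 * ((Real.sinh a)⁻¹ * (1 - r)⁻¹)
        ≤ 2 * π / Real.log 2 * ((1165665629936 : ℝ)⁻¹ * (1 - 1e-8 : ℝ)⁻¹) := by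
          apply mul_le_mul_of_nonneg_left _ hC.le
          apply mul_le_mul h2 h3 h4.le (by norm_num)
      _ < (2 * 3.14159265358979323847 / 0.6931471803) *
            ((1165665629936 : ℝ)⁻¹ * (1 - 1e-8 : ℝ)⁻¹) := by
          apply mul_lt_mul_of_pos_right h1 (by norm_num)
      _ < 7.8e-12 := by norm_num
  calc (2 * π / Real.log 2) *
      |∑' n : ℕ, Real.sin (2 * ((n : ℝ) + 1) * π * t) /
        Real.sinh (2 * ((n : ℝ) + 1) * π ^ 2 / Real.log 2)|
      ≤ 2 * π / Real.log 2 * ((Real.sinh a)⁻¹ * (1 - r)⁻¹) :=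
        mul_le_mul_of_nonneg_left hsum hC.le
    _ < 7.8e-12 := hbound
end
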